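/- Proposition (follower payoffs in 2×2 games): Let Γ be a non-degenerate 2×2 bimatrix game such that conditions (ℓ1) and (ℓ2) hold for player I, namely: (ℓ1) some pure strategy of player I is strongly dominated (there exist i and x' ∈ X with α(x',e_j) > α(e_i,e_j) for all j), and (ℓ2) player I has an equalizing strategy x^d ∈ X over the follower's payoffs (i.e. (x^dᵀB)_1 = (x^dᵀB)_2) such that for every Nash equilibrium (x^N,y^N) of Γ there is a pure strategy j with α(x^d,e_j) ≥ α(x^N,y^N). Then for every Nash equilibrium (x^N,y^N) of Γ, the following are equivalent: (a) there exist x^L ∈ X^L and j^F ∈ BR_II(x^L) with α(x^L,e_{j^F}) = α^L and β(x^L,e_{j^F}) < β(x^N,y^N); (b) v_B < β(x^N,y^N), where v_B = max_{y∈Y} min_i β(e_i,y) is the matrix game value of player II. -/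

import Mathlib

open Matrix

noncomputable section

/-- The set of mixed strategies: the standard simplex in `ℝ^m`. -/
def Simp (m : ℕ) : Set (Fin m → ℝ) := stdSimplex ℝ (Fin m)

/-- Bilinear payoff `xᵀ A y`. -/
def pay {m n : ℕ} (A : Matrix (Fin m) (Fin n) ℝ) (x : Fin m → ℝ) (y : Fin n → ℝ) : ℝ :=
  x ⬝ᵥ A.mulVec y

/-- Payoff of a mixed strategy `x` against the pure strategy `j`: `α(x, e_j) = (xᵀA)_j`. -/
def purePay {m n : ℕ} (A : Matrix (Fin m) (Fin n) ℝ) (x : Fin m → ℝ) (j : Fin n) : ℝ :=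
  Matrix.vecMul x A j

/-- Pure best replies of player II against `x`. -/
def BRII {m n : ℕ} (B : Matrix (Fin m) (Fin n) ℝ) (x : Fin m → ℝ) : Set (Fin n) :=
  {j | ∀ k, purePay B x k ≤ purePay B x j}

/-- Best-reply region `X(j)` of column `j`. -/
def XReg {m n : ℕ} (B : Matrix (Fin m) (Fin n) ℝ) (j : Fin n) : Set (Fin m → ℝ) :=
  {x ∈ Simp m | j ∈ BRII B x}

/-- `D`: columns whose best-reply region has a fully mixed point. -/
def Dset {m n : ℕ} (B : Matrix (Fin m) (Fin n) ℝ) : Set (Fin n) :=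
  {j | ∃ x ∈ XReg B j, ∀ i, 0 < x i}

/-- `E(j)`: columns of `B` payoff-equivalent to column `j`. -/
def Ecols {m n : ℕ} (B : Matrix (Fin m) (Fin n) ℝ) (j : Fin n) : Set (Fin n) :=
  {k | ∀ i, B i k = B i j}

/-- `min_j α(x, e_j)`. -/
def minPure {m n : ℕ} (A : Matrix (Fin m) (Fin n) ℝ) (x : Fin m → ℝ) : ℝ :=
  sInf {w | ∃ j, w = purePay A x j}

/-- `max_j α(x, e_j)`. -/
def maxPure {m n : ℕ} (A : Matrix (Fin m) (Fin n) ℝ) (x : Fin m → ℝ) : ℝ :=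
  sSup {w | ∃ j, w = purePay A x j}

/-- `max_{j ∈ BR_II(x)} α(x, e_j)`. -/
def maxBR {m n : ℕ} (A B : Matrix (Fin m) (Fin n) ℝ) (x : Fin m → ℝ) : ℝ :=
  sSup {w | ∃ j ∈ BRII B x, w = purePay A x j}

/-- Matrix game value `v_A = max_{x ∈ X} min_j α(x, e_j)`. -/
def matVal {m n : ℕ} (A : Matrix (Fin m) (Fin n) ℝ) : ℝ :=
  sSup {v | ∃ x ∈ Simp m, v = minPure A x}

/-- `min_{k ∈ E(j)} α(x, e_k)`. -/
def minE {m n : ℕ} (A B : Matrix (Fin m) (Fin n) ℝ) (j : Fin n) (x : Fin m → ℝ) : ℝ :=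
  sInf {w | ∃ k ∈ Ecols B j, w = purePay A x k}

/-- Commitment value `α^L = max_{j∈D} max_{x∈X(j)} min_{k∈E(j)} α(x,e_k)`. -/
def alphaL {m n : ℕ} (A B : Matrix (Fin m) (Fin n) ℝ) : ℝ :=
  sSup {v | ∃ j ∈ Dset B, ∃ x ∈ XReg B j, v = minE A B j x}

/-- Highest leader payoff `α^H = max_{j : X(j)≠∅} max_{x∈X(j)} α(x,e_j)`. -/
def alphaH {m n : ℕ} (A B : Matrix (Fin m) (Fin n) ℝ) : ℝ :=
  sSup {v | ∃ j, ∃ x ∈ XReg B j, v = purePay A x j}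

/-- Commitment optimal strategies of the leader (player I). -/
def XLset {m n : ℕ} (A B : Matrix (Fin m) (Fin n) ℝ) : Set (Fin m → ℝ) :=
  {x | ∃ j ∈ Dset B, x ∈ XReg B j ∧ minE A B j x = alphaL A B}

/-- Non-degeneracy for player I: no mixed strategy of player I has more pure best
replies (among player II's pure strategies) than the size of its support. -/
def NondegFor {m n : ℕ} (B : Matrix (Fin m) (Fin n) ℝ) : Prop :=
  ∀ x ∈ Simp m, (BRII B x).ncard ≤ {i | x i ≠ 0}.ncard

/-- Nash equilibrium of the bimatrix game `(A,B)`. -/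
def isNE {m n : ℕ} (A B : Matrix (Fin m) (Fin n) ℝ) (x : Fin m → ℝ) (y : Fin n → ℝ) : Prop :=
  x ∈ Simp m ∧ y ∈ Simp n ∧
  (∀ x' ∈ Simp m, pay A x' y ≤ pay A x y) ∧
  (∀ y' ∈ Simp n, pay B x y' ≤ pay B x y)

/-- Strategies of player I appearing in some Nash equilibrium. -/
def NEX {m n : ℕ} (A B : Matrix (Fin m) (Fin n) ℝ) : Set (Fin m → ℝ) :=
  {x | ∃ y, isNE A B x y}

/-- Strategies of player II appearing in some Nash equilibrium. -/
def NEY {m n : ℕ} (A B : Matrix (Fin m) (Fin n) ℝ) : Set (Fin n → ℝ) :=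
  {y | ∃ x, isNE A B x y}

/-- Weakly unilaterally competitive bimatrix game. -/
def WUC {m n : ℕ} (A B : Matrix (Fin m) (Fin n) ℝ) : Prop :=
  (∀ x₁ ∈ Simp m, ∀ x₂ ∈ Simp m, ∀ y ∈ Simp n,
    (pay A x₁ y > pay A x₂ y → pay B x₁ y ≤ pay B x₂ y) ∧
    (pay A x₁ y = pay A x₂ y → pay B x₁ y = pay B x₂ y)) ∧
  (∀ y₁ ∈ Simp n, ∀ y₂ ∈ Simp n, ∀ x ∈ Simp m,
    (pay B x y₁ > pay B x y₂ → pay A x y₁ ≤ pay A x y₂) ∧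
    (pay B x y₁ = pay B x y₂ → pay A x y₁ = pay A x y₂))

/-!
Row `i` is dominated by row `d`, so every Nash equilibrium is `(e_d, e_js)` with `js` the
follower's strict best reply to `e_d`; non-degeneracy makes the equalizing strategy `x^d`
fully mixed. The best-reply region of the other column `jo` is `{x | x_d ≤ x^d_d}`, on which
`α(·, e_jo)` increases with `x_d`, while on the region of `js` the leader gets at most
`α(e_d, e_js)`; with (ℓ2) this gives `α^L = α(x^d, e_jo)`, attained at `x^d`.
Direction (a) ⇒ (b) holds in every game: the follower's best-reply payoff against any leader
strategy is at least `v_B`. For (b) ⇒ (a), if `β(x^d, e_jo) ≥ β(e_d, e_js)` then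
`β(e_i, e_js) ≥ β(e_d, e_js)`, so the pure strategy `js` guarantees the follower `β(e_d, e_js)`.
-/

open Finset

section General

variable {m n : ℕ}

lemma dotProduct_le_of_mem_Simp {w f : Fin n → ℝ} {c : ℝ} (hw : w ∈ Simp n)
    (hf : ∀ k, f k ≤ c) : w ⬝ᵥ f ≤ c :=
  calc w ⬝ᵥ f = ∑ k, w k * f k := rfl
    _ ≤ ∑ k, w k * c := sum_le_sum fun k _ => mul_le_mul_of_nonneg_left (hf k) (hw.1 k)
    _ = c := by rw [← sum_mul, hw.2, one_mul]

lemma le_dotProduct_of_mem_Simp {w f : Fin n → ℝ} {c : ℝ} (hw : w ∈ Simp n)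
    (hf : ∀ k, c ≤ f k) : c ≤ w ⬝ᵥ f :=
  calc c = ∑ k, w k * c := by rw [← sum_mul, hw.2, one_mul]
    _ ≤ ∑ k, w k * f k := sum_le_sum fun k _ => mul_le_mul_of_nonneg_left (hf k) (hw.1 k)
    _ = w ⬝ᵥ f := rfl

lemma lt_dotProduct_of_mem_Simp [NeZero n] {w f : Fin n → ℝ} {c : ℝ} (hw : w ∈ Simp n)
    (hf : ∀ k, c < f k) : c < w ⬝ᵥ f := by
  obtain ⟨k₀, hk₀⟩ := Finite.exists_min f
  exact (hf k₀).trans_le (le_dotProduct_of_mem_Simp hw hk₀)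

lemma purePay_single (A : Matrix (Fin m) (Fin n) ℝ) (i : Fin m) (j : Fin n) :
    purePay A (Pi.single i 1) j = A i j := by
  rw [purePay, single_one_vecMul, row_apply]

lemma minPure_le_purePay (A : Matrix (Fin m) (Fin n) ℝ) (x : Fin m → ℝ) (j : Fin n) :
    minPure A x ≤ purePay A x j :=
  csInf_le ((Set.finite_range (purePay A x)).bddBelow.mono
    (by rintro _ ⟨k, rfl⟩; exact ⟨k, rfl⟩)) ⟨j, rfl⟩

lemma le_minPure [NeZero n] {A : Matrix (Fin m) (Fin n) ℝ} {x : Fin m → ℝ} {c : ℝ}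
    (h : ∀ j, c ≤ purePay A x j) : c ≤ minPure A x :=
  le_csInf ⟨_, 0, rfl⟩ fun _ ⟨j, hj⟩ => hj ▸ h j

lemma minPure_transpose_le_pay (B : Matrix (Fin m) (Fin n) ℝ) {x : Fin m → ℝ}
    (hx : x ∈ Simp m) (y : Fin n → ℝ) : minPure Bᵀ y ≤ pay B x y := by
  refine le_dotProduct_of_mem_Simp hx fun i => (minPure_le_purePay Bᵀ y i).trans_eq ?_
  rw [purePay, vecMul_transpose]

lemma pay_le_purePay_of_mem_BRII {B : Matrix (Fin m) (Fin n) ℝ} {x : Fin m → ℝ}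
    {y : Fin n → ℝ} {j : Fin n} (hy : y ∈ Simp n) (hj : j ∈ BRII B x) :
    pay B x y ≤ purePay B x j := by
  rw [pay, dotProduct_mulVec, dotProduct_comm]
  exact dotProduct_le_of_mem_Simp hy hj

lemma matVal_transpose_le_purePay {B : Matrix (Fin m) (Fin n) ℝ} {x : Fin m → ℝ} {j : Fin n}
    (hx : x ∈ Simp m) (hj : j ∈ BRII B x) : matVal Bᵀ ≤ purePay B x j := by
  refine csSup_le ⟨_, _, single_mem_stdSimplex ℝ j, rfl⟩ ?_
  rintro v ⟨y, hy, rfl⟩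
  exact (minPure_transpose_le_pay B hx y).trans (pay_le_purePay_of_mem_BRII hy hj)

lemma le_matVal_transpose [NeZero m] [NeZero n] {B : Matrix (Fin m) (Fin n) ℝ} {j : Fin n}
    {c : ℝ} (h : ∀ i, c ≤ B i j) : c ≤ matVal Bᵀ := by
  obtain ⟨j₀, hj₀⟩ := Finite.exists_max (purePay B (Pi.single 0 1))
  have hbdd : BddAbove {v | ∃ y ∈ Simp n, v = minPure Bᵀ y} := by
    refine ⟨purePay B (Pi.single 0 1) j₀, ?_⟩
    rintro v ⟨y, hy, rfl⟩
    exact (minPure_transpose_le_pay B (single_mem_stdSimplex ℝ 0) y).trans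
      (pay_le_purePay_of_mem_BRII hy hj₀)
  refine (le_minPure fun i => ?_).trans (le_csSup hbdd ⟨_, single_mem_stdSimplex ℝ j, rfl⟩)
  rw [purePay_single, transpose_apply]
  exact h i

lemma minE_eq_purePay (A : Matrix (Fin m) (Fin n) ℝ) {B : Matrix (Fin m) (Fin n) ℝ} {d : Fin m}
    (hB : Function.Injective (B d)) (j : Fin n) (x : Fin m → ℝ) :
    minE A B j x = purePay A x j := by
  have hE : {w | ∃ k ∈ Ecols B j, w = purePay A x k} = {purePay A x j} := by
    ext w
    constructor
    · rintro ⟨k, hk, rfl⟩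
      rw [hB (hk d)]
      rfl
    · rintro rfl
      exact ⟨j, fun _ => rfl, rfl⟩
  rw [minE, hE, csInf_singleton]

end General

section TwoByTwo

variable {d i : Fin 2}

lemma fin_two_univ_eq_pair (hdi : d ≠ i) : (univ : Finset (Fin 2)) = {d, i} := by
  revert d i
  decide

lemma dotProduct_eq_of_ne (hdi : d ≠ i) (w f : Fin 2 → ℝ) :
    w ⬝ᵥ f = w d * f d + w i * f i := by
  rw [dotProduct, fin_two_univ_eq_pair hdi, sum_pair hdi]

lemma add_eq_one_of_mem_Simp (hdi : d ≠ i) {x : Fin 2 → ℝ} (hx : x ∈ Simp 2) :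
    x d + x i = 1 := by
  rw [← sum_pair hdi, ← fin_two_univ_eq_pair hdi]
  exact hx.2

lemma purePay_eq_add_mul (hdi : d ≠ i) (A : Matrix (Fin 2) (Fin 2) ℝ) {x : Fin 2 → ℝ}
    (hx : x ∈ Simp 2) (j : Fin 2) : purePay A x j = A i j + x d * (A d j - A i j) := by
  have hxi : x i = 1 - x d := by linarith [add_eq_one_of_mem_Simp hdi hx]
  rw [purePay, vecMul, dotProduct_eq_of_ne hdi, hxi]
  ring

lemma apply_eq_zero_of_le_dotProduct (hdi : d ≠ i) {w f : Fin 2 → ℝ} (hw : w ∈ Simp 2)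
    (hf : f i < f d) (hle : f d ≤ w ⬝ᵥ f) : w i = 0 := by
  have hwd : w d = 1 - w i := by linarith [add_eq_one_of_mem_Simp hdi hw]
  rw [dotProduct_eq_of_ne hdi, hwd] at hle
  nlinarith [hw.1 i]

lemma eq_single_of_apply_eq_zero (hdi : d ≠ i) {w : Fin 2 → ℝ} (hw : w ∈ Simp 2)
    (hwi : w i = 0) : w = Pi.single d 1 := by
  have hwd : w d = 1 := by linarith [add_eq_one_of_mem_Simp hdi hw]
  funext k
  rcases (by omega : k = d ∨ k = i) with rfl | rfl
  · rw [hwd, Pi.single_eq_same]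
  · rw [hwi, Pi.single_eq_of_ne hdi.symm]

lemma row_lt_of_strongly_dominated (hdi : d ≠ i) {A : Matrix (Fin 2) (Fin 2) ℝ}
    {x' : Fin 2 → ℝ} (hx' : x' ∈ Simp 2)
    (hdom : ∀ j, purePay A (Pi.single i 1) j < purePay A x' j) (j : Fin 2) : A i j < A d j := by
  have h := hdom j
  rw [purePay_single, purePay_eq_add_mul hdi A hx'] at h
  nlinarith [hx'.1 d]

variable {A B : Matrix (Fin 2) (Fin 2) ℝ} {js jo : Fin 2}

lemma isNE_eq_single (hdi : d ≠ i) (hj : jo ≠ js) (hdom : ∀ j, A i j < A d j)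
    (hBd : B d jo < B d js) {xN yN : Fin 2 → ℝ} (hNE : isNE A B xN yN) :
    xN = Pi.single d 1 ∧ yN = Pi.single js 1 := by
  obtain ⟨hxN, hyN, hbestI, hbestII⟩ := hNE
  have hAy : (A *ᵥ yN) i < (A *ᵥ yN) d := by
    rw [← sub_pos, mulVec, mulVec, ← sub_dotProduct, dotProduct_comm]
    exact lt_dotProduct_of_mem_Simp hyN fun j => sub_pos.mpr (hdom j)
  have hxN_eq : xN = Pi.single d 1 := by
    refine eq_single_of_apply_eq_zero hdi hxN (apply_eq_zero_of_le_dotProduct hdi hxN hAy ?_)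
    simpa only [pay, single_one_dotProduct] using hbestI _ (single_mem_stdSimplex ℝ d)
  subst hxN_eq
  have hpayB : ∀ y, pay B (Pi.single d 1) y = y ⬝ᵥ B d := fun y => by
    rw [pay, single_one_dotProduct, dotProduct_comm]
    rfl
  refine ⟨rfl, eq_single_of_apply_eq_zero hj.symm hyN
    (apply_eq_zero_of_le_dotProduct hj.symm hyN (f := B d) hBd ?_)⟩
  simpa only [hpayB, single_one_dotProduct] using hbestII _ (single_mem_stdSimplex ℝ js)

lemma pay_single_single (A : Matrix (Fin 2) (Fin 2) ℝ) (d j : Fin 2) :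
    pay A (Pi.single d 1) (Pi.single j 1) = A d j := by
  rw [pay, mulVec_single_one, single_one_dotProduct, col_apply]

lemma mem_BRII_of_purePay_eq {x : Fin 2 → ℝ} (heq : purePay B x 0 = purePay B x 1)
    (j : Fin 2) : j ∈ BRII B x := by
  intro k
  fin_cases j <;> fin_cases k <;> simp [heq]

lemma pos_of_purePay_eq (hnd : NondegFor B) {x : Fin 2 → ℝ} (hx : x ∈ Simp 2)
    (heq : purePay B x 0 = purePay B x 1) (k : Fin 2) : 0 < x k := by
  have hBR : BRII B x = Set.univ := Set.eq_univ_of_forall (mem_BRII_of_purePay_eq heq)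
  have hsupp : {k | x k ≠ 0} = Set.univ := by
    refine Set.eq_of_subset_of_ncard_le (Set.subset_univ _) ?_
    simpa only [hBR] using hnd x hx
  have hk : x k ≠ 0 := by
    change k ∈ {k | x k ≠ 0}
    rw [hsupp]
    trivial
  exact (hx.1 k).lt_of_ne' hk

lemma row_injective_of_nondegFor (hnd : NondegFor B) (d : Fin 2) :
    Function.Injective (B d) := by
  intro a b hab
  by_contra hab'
  have hrow : B d 0 = B d 1 := by
    rcases (by omega : a = 0 ∧ b = 1 ∨ a = 1 ∧ b = 0) with ⟨rfl, rfl⟩ | ⟨rfl, rfl⟩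
    exacts [hab, hab.symm]
  obtain ⟨k, hk⟩ := exists_ne d
  have hpos := pos_of_purePay_eq hnd (single_mem_stdSimplex ℝ d)
    (by rw [purePay_single, purePay_single, hrow]) k
  rw [Pi.single_eq_of_ne hk] at hpos
  exact hpos.false

variable {xd : Fin 2 → ℝ}

lemma apply_le_of_mem_XReg (hdi : d ≠ i) (hBd : B d jo < B d js) (hxd : xd ∈ Simp 2)
    (hxdi : 0 < xd i) (heq : purePay B xd js = purePay B xd jo) {x : Fin 2 → ℝ}
    (hx : x ∈ XReg B jo) : x d ≤ xd d := by
  have hreg := hx.2 js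
  have hxdd : xd d < 1 := by linarith [add_eq_one_of_mem_Simp hdi hxd]
  rw [purePay_eq_add_mul hdi B hxd, purePay_eq_add_mul hdi B hxd] at heq
  rw [purePay_eq_add_mul hdi B hx.1, purePay_eq_add_mul hdi B hx.1] at hreg
  have hslope : B d jo - B i jo < B d js - B i js := by nlinarith
  nlinarith

lemma alphaL_eq (hdi : d ≠ i) (hj : jo ≠ js) (hdom : ∀ j, A i j < A d j)
    (hinj : Function.Injective (B d)) (hBd : B d jo < B d js) (hxd : xd ∈ Simp 2)
    (hxd_pos : ∀ k, 0 < xd k) (hBR : ∀ j, j ∈ BRII B xd) (hge : A d js ≤ purePay A xd jo) :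
    alphaL A B = purePay A xd jo := by
  refine IsGreatest.csSup_eq ⟨⟨jo, ⟨xd, ⟨hxd, hBR jo⟩, hxd_pos⟩, xd, ⟨hxd, hBR jo⟩,
    (minE_eq_purePay A hinj jo xd).symm⟩, ?_⟩
  rintro v ⟨j, -, x, hx, rfl⟩
  rw [minE_eq_purePay A hinj]
  rcases (by omega : j = jo ∨ j = js) with rfl | rfl
  · have hx_le := apply_le_of_mem_XReg hdi hBd hxd (hxd_pos i)
      (le_antisymm (hBR _ _) (hBR _ _)) hx
    rw [purePay_eq_add_mul hdi A hx.1, purePay_eq_add_mul hdi A hxd]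
    nlinarith [hdom j]
  · have hx1 : x d ≤ 1 := by linarith [add_eq_one_of_mem_Simp hdi hx.1, hx.1.1 i]
    rw [purePay_eq_add_mul hdi A hx.1]
    nlinarith [hdom j]

theorem exists_commitment_lt_iff (hdi : d ≠ i) (hj : jo ≠ js) (hdom : ∀ j, A i j < A d j)
    (hBd : B d jo < B d js) (hnd : NondegFor B) (hxd : xd ∈ Simp 2)
    (heq : purePay B xd 0 = purePay B xd 1) {xN yN : Fin 2 → ℝ} (hNE : isNE A B xN yN)
    (hge : ∃ j, pay A xN yN ≤ purePay A xd j) :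
    (∃ xL ∈ XLset A B, ∃ jF ∈ BRII B xL,
        purePay A xL jF = alphaL A B ∧ purePay B xL jF < pay B xN yN) ↔
      matVal Bᵀ < pay B xN yN := by
  obtain ⟨rfl, rfl⟩ := isNE_eq_single hdi hj hdom hBd hNE
  rw [pay_single_single] at hge ⊢
  have hxd_pos := pos_of_purePay_eq hnd hxd heq
  have hBR : ∀ j, j ∈ BRII B xd := mem_BRII_of_purePay_eq heq
  have hinj := row_injective_of_nondegFor hnd d
  have hxd_js : purePay A xd js < A d js := by
    rw [purePay_eq_add_mul hdi A hxd]
    nlinarith [hdom js, add_eq_one_of_mem_Simp hdi hxd, hxd_pos i]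
  have hge_jo : A d js ≤ purePay A xd jo := by
    obtain ⟨j, hj'⟩ := hge
    rcases (by omega : j = jo ∨ j = js) with rfl | rfl
    exacts [hj', absurd hj' hxd_js.not_ge]
  have hαL := alphaL_eq hdi hj hdom hinj hBd hxd hxd_pos hBR hge_jo
  constructor
  · rintro ⟨xL, ⟨-, -, ⟨hxL, -⟩, -⟩, jF, hjF, -, hlt⟩
    exact (matVal_transpose_le_purePay hxL hjF).trans_lt hlt
  · intro hv
    have hxd_jo : xd ∈ XReg B jo := ⟨hxd, hBR jo⟩
    refine ⟨xd, ⟨jo, ⟨xd, hxd_jo, hxd_pos⟩, hxd_jo, ?_⟩, jo, hBR jo, hαL.symm, ?_⟩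
    · rw [minE_eq_purePay A hinj, hαL]
    · by_contra! hle
      rw [le_antisymm (hBR js jo) (hBR jo js), purePay_eq_add_mul hdi B hxd] at hle
      have hcol : ∀ k, B d js ≤ B k js := by
        intro k
        rcases (by omega : k = d ∨ k = i) with rfl | rfl
        · exact le_rfl
        · nlinarith [add_eq_one_of_mem_Simp hdi hxd, hxd_pos k]
      exact (le_matVal_transpose hcol).not_gt hv

end TwoByTwo

theorem stmt17_general (A B : Matrix (Fin 2) (Fin 2) ℝ)
    (hndI : NondegFor B)
    (hl1 : ∃ i : Fin 2, ∃ x' ∈ Simp 2,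
      ∀ j : Fin 2, purePay A (Pi.single i (1 : ℝ)) j < purePay A x' j)
    (hl2 : ∃ xd ∈ Simp 2, purePay B xd 0 = purePay B xd 1 ∧
      ∀ (xN yN : Fin 2 → ℝ), isNE A B xN yN →
        ∃ j : Fin 2, pay A xN yN ≤ purePay A xd j) :
    ∀ (xN yN : Fin 2 → ℝ), isNE A B xN yN →
      ((∃ xL ∈ XLset A B, ∃ jF ∈ BRII B xL,
          purePay A xL jF = alphaL A B ∧ purePay B xL jF < pay B xN yN) ↔
        matVal Bᵀ < pay B xN yN) := by
  intro xN yN hNE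
  obtain ⟨i, x', hx', hdom⟩ := hl1
  obtain ⟨xd, hxd, heq, hge⟩ := hl2
  obtain ⟨d, hdi⟩ := exists_ne i
  have hrow := row_lt_of_strongly_dominated hdi hx' hdom
  have hB01 := (row_injective_of_nondegFor hndI d).ne (by decide : (0 : Fin 2) ≠ 1)
  rcases hB01.lt_or_gt with hB | hB
  · exact exists_commitment_lt_iff hdi (by decide) hrow hB hndI hxd heq hNE (hge xN yN hNE)
  · exact exists_commitment_lt_iff hdi (by decide) hrow hB hndI hxd heq hNE (hge xN yN hNE)

/-- follower payoffs in non-degenerate 2×2 games. If conditions (ℓ1)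
and (ℓ2) hold for player I, then for every Nash equilibrium `(x^N,y^N)`: there is a
commitment optimal strategy `x^L` and an inducible best reply `j^F` realizing `α^L`
with follower payoff `β(x^L,e_{j^F}) < β(x^N,y^N)` iff `v_B < β(x^N,y^N)`. -/
theorem stmt17 (A B : Matrix (Fin 2) (Fin 2) ℝ)
    (hndI : NondegFor B) (hndII : NondegFor Aᵀ)
    (hl1 : ∃ i : Fin 2, ∃ x' ∈ Simp 2,
      ∀ j : Fin 2, purePay A (Pi.single i (1 : ℝ)) j < purePay A x' j)
    (hl2 : ∃ xd ∈ Simp 2, purePay B xd 0 = purePay B xd 1 ∧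
      ∀ (xN yN : Fin 2 → ℝ), isNE A B xN yN →
        ∃ j : Fin 2, pay A xN yN ≤ purePay A xd j) :
    ∀ (xN yN : Fin 2 → ℝ), isNE A B xN yN →
      ((∃ xL ∈ XLset A B, ∃ jF ∈ BRII B xL,
          purePay A xL jF = alphaL A B ∧ purePay B xL jF < pay B xN yN) ↔
        matVal Bᵀ < pay B xN yN) :=
  stmt17_general A B hndI hl1 hl2
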